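/- (Pointwise uniform relative error of the approximate Beta density, the core of Proposition 2.) Fix κ > 0. There exist C > 0 and λ₀ > 0 such that for all λ ≥ λ₀ and all y ∈ (0, 1), |y^{κλ − 1}(1 − y)^{κ − 1}/B(κλ, κ) − ((κλ)^κ/Γ(κ))·y^{κλ − 1}(1 − y)^{κ − 1}| ≤ (C/λ) · ((κλ)^κ/Γ(κ))·y^{κλ − 1}(1 − y)^{κ − 1}. -/

import Mathlib

/-- The Beta function `B(a, b) = Γ(a)Γ(b)/Γ(a + b)` for the real Gamma function. -/
noncomputable def betaFun (a b : ℝ) : ℝ := Real.Gamma a * Real.Gamma b / Real.Gamma (a + b)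



lemma gamma_add_nat (x : ℝ) (hx : 0 < x) (n : ℕ) :
    Real.Gamma (x + n) = Real.Gamma x * ∏ j ∈ Finset.range n, (x + j) := by
  induction n with
  | zero => simp
  | succ n ih =>
    have h : x + ((n : ℝ) + 1) = (x + n) + 1 := by ring
    push_cast
    rw [h, Real.Gamma_add_one (by positivity), ih, Finset.prod_range_succ]
    ring

lemma gamma_convex {u v s t : ℝ} (hu : 0 < u) (hv : 0 < v) (hs : 0 ≤ s) (ht : 0 ≤ t)
    (hst : s + t = 1) :
    Real.Gamma (s * u + t * v) ≤ Real.Gamma u ^ s * Real.Gamma v ^ t := by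
  have hw : 0 < s * u + t * v := by
    rcases lt_or_ge 0 s with h | h
    · have : 0 ≤ t * v := mul_nonneg ht hv.le
      nlinarith
    · have hs0 : s = 0 := le_antisymm h hs
      have ht1 : t = 1 := by linarith
      simp [hs0, ht1, hv]
  have h := Real.convexOn_log_Gamma.2 (Set.mem_Ioi.2 hu) (Set.mem_Ioi.2 hv) hs ht hst
  simp only [Function.comp_apply, smul_eq_mul] at h
  calc Real.Gamma (s * u + t * v)
      = Real.exp (Real.log (Real.Gamma (s * u + t * v))) :=
        (Real.exp_log (Real.Gamma_pos_of_pos hw)).symm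
    _ ≤ Real.exp (s * Real.log (Real.Gamma u) + t * Real.log (Real.Gamma v)) :=
        Real.exp_le_exp.2 h
    _ = Real.Gamma u ^ s * Real.Gamma v ^ t := by
        rw [Real.rpow_def_of_pos (Real.Gamma_pos_of_pos hu),
          Real.rpow_def_of_pos (Real.Gamma_pos_of_pos hv), ← Real.exp_add]
        ring_nf

lemma exp_le_one_add_two_mul {s : ℝ} (hs0 : 0 ≤ s) (hs : s ≤ 1/2) :
    Real.exp s ≤ 1 + 2 * s := by
  have hE := Real.add_one_le_exp (-s)
  have hprod : Real.exp s * Real.exp (-s) = 1 := by rw [← Real.exp_add]; simp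
  have hA : 1 ≤ (1 + 2 * s) * Real.exp (-s) := by nlinarith
  have hB : Real.exp s * Real.exp (-s) ≤ (1 + 2 * s) * Real.exp (-s) := by
    rw [hprod]; exact hA
  exact le_of_mul_le_mul_right hB (Real.exp_pos (-s))

set_option maxHeartbeats 1000000 in
lemma ratio_bound (κ : ℝ) (hκ : 0 < κ) {x : ℝ} (hx : 2 * (⌈κ⌉₊ : ℝ) ^ 2 ≤ x) :
    |Real.Gamma (x + κ) / (Real.Gamma x * x ^ κ) - 1| ≤ 2 * (⌈κ⌉₊ : ℝ) ^ 2 / x := by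
  set m : ℕ := ⌈κ⌉₊ with hm
  set M : ℝ := (m : ℝ) with hMdef
  have hM1 : 1 ≤ M := by
    have h1 : (1 : ℕ) ≤ m := Nat.ceil_pos.2 hκ
    rw [hMdef]
    exact_mod_cast h1
  have hκM : κ ≤ M := Nat.le_ceil κ
  have hM0 : 0 < M := lt_of_lt_of_le one_pos hM1
  have hxpos : 0 < x := lt_of_lt_of_le (by nlinarith) hx
  have hGx : 0 < Real.Gamma x := Real.Gamma_pos_of_pos hxpos
  have hGxκ : 0 < Real.Gamma (x + κ) := Real.Gamma_pos_of_pos (by positivity)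
  have hxκ : (0:ℝ) < x ^ κ := Real.rpow_pos_of_pos hxpos κ
  have hden : 0 < Real.Gamma x * x ^ κ := mul_pos hGx hxκ
  set P : ℝ := ∏ j ∈ Finset.range m, (x + j) with hPdef
  set Q : ℝ := ∏ j ∈ Finset.range m, (x + κ + j) with hQdef
  have hPlow : x ^ M ≤ P := by
    calc x ^ M = x ^ m := by rw [hMdef, Real.rpow_natCast]
      _ = ∏ _j ∈ Finset.range m, x := by simp
      _ ≤ P := Finset.prod_le_prod (fun i _ => hxpos.le) fun i _ => by
          have : (0:ℝ) ≤ i := Nat.cast_nonneg i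
          linarith
  have hPpos : 0 < P := lt_of_lt_of_le (Real.rpow_pos_of_pos hxpos M) hPlow
  have hPhigh : P ≤ (x + M) ^ m := by
    calc P ≤ ∏ _j ∈ Finset.range m, (x + M) := ?_
      _ = (x + M) ^ m := by simp
    refine Finset.prod_le_prod (fun i _ => by positivity) fun i hi => ?_
    have : (i:ℝ) ≤ M := by
      have h := Finset.mem_range.1 hi
      rw [hMdef]
      exact_mod_cast h.le
    linarith
  have hQhigh : Q ≤ (x + 2 * M) ^ m := by
    calc Q ≤ ∏ _j ∈ Finset.range m, (x + 2 * M) := ?_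
      _ = (x + 2 * M) ^ m := by simp
    refine Finset.prod_le_prod (fun i _ => by positivity) fun i hi => ?_
    have : (i:ℝ) ≤ M := by
      have h := Finset.mem_range.1 hi
      rw [hMdef]
      exact_mod_cast h.le
    linarith
  have hGP : Real.Gamma (x + M) = Real.Gamma x * P := gamma_add_nat x hxpos m
  have hGQ : Real.Gamma (x + κ + M) = Real.Gamma (x + κ) * Q :=
    gamma_add_nat (x + κ) (by positivity) m
  -- Upper bound: Γ(x+κ) ≤ (1 + 2M²/x) * (Γ x * x^κ)
  have hupper : Real.Gamma (x + κ) ≤ (1 + 2 * M ^ 2 / x) * (Real.Gamma x * x ^ κ) := by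
    have ht0 : 0 ≤ κ / M := by positivity
    have ht1 : κ / M ≤ 1 := (div_le_one hM0).2 hκM
    have hconv := gamma_convex hxpos (show (0:ℝ) < x + M by linarith)
      (by linarith : (0:ℝ) ≤ 1 - κ / M) ht0 (by ring)
    have harg : (1 - κ / M) * x + κ / M * (x + M) = x + κ := by
      field_simp
      ring
    rw [harg, hGP] at hconv
    have halg : Real.Gamma x ^ (1 - κ / M) * (Real.Gamma x * P) ^ (κ / M)
        = Real.Gamma x * P ^ (κ / M) := by
      rw [Real.mul_rpow hGx.le hPpos.le, ← mul_assoc, ← Real.rpow_add hGx]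
      norm_num
    rw [halg] at hconv
    have hPt : P ^ (κ / M) ≤ (1 + 2 * M ^ 2 / x) * x ^ κ := by
      have hxM : x ^ κ = (x ^ M) ^ (κ / M) := by
        rw [← Real.rpow_mul hxpos.le]
        congr 1
        field_simp
      have h1 : P ^ (κ / M) ≤ (P / x ^ M) * x ^ κ := by
        rw [hxM]
        have hb1 : 1 ≤ P / x ^ M := (one_le_div (Real.rpow_pos_of_pos hxpos M)).2 hPlow
        have := Real.rpow_le_rpow_of_exponent_le hb1 ht1
        rw [Real.rpow_one] at this
        calc P ^ (κ / M) = (P / x ^ M) ^ (κ / M) * (x ^ M) ^ (κ / M) := by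
              rw [← Real.mul_rpow (by positivity) (by positivity), div_mul_cancel₀]
              exact (Real.rpow_pos_of_pos hxpos M).ne'
          _ ≤ (P / x ^ M) * (x ^ M) ^ (κ / M) :=
              mul_le_mul_of_nonneg_right this (by positivity)
      have h2 : P / x ^ M ≤ 1 + 2 * M ^ 2 / x := by
        have hxMeq : x ^ M = x ^ m := by rw [hMdef, Real.rpow_natCast]
        have h3 : P / x ^ M ≤ ((x + M) / x) ^ m := by
          rw [hxMeq, div_pow]
          exact div_le_div_of_nonneg_right hPhigh (by positivity) |>.trans_eq rfl
        have h4 : ((x + M) / x) ^ m ≤ Real.exp (M ^ 2 / x) := by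
          have h5 : (x + M) / x ≤ Real.exp (M / x) := by
            have := Real.add_one_le_exp (M / x)
            rw [add_div, div_self hxpos.ne']
            linarith
          calc ((x + M) / x) ^ m ≤ Real.exp (M / x) ^ m :=
                pow_le_pow_left₀ (by positivity) h5 m
            _ = Real.exp (M / x * m) := by rw [← Real.exp_nat_mul]; ring_nf
            _ = Real.exp (M ^ 2 / x) := by rw [hMdef]; ring_nf
        have h6 : Real.exp (M ^ 2 / x) ≤ 1 + 2 * M ^ 2 / x := by
          have hh := exp_le_one_add_two_mul (s := M ^ 2 / x) (by positivity)
            (by rw [div_le_div_iff₀ hxpos two_pos]; linarith)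
          calc Real.exp (M ^ 2 / x) ≤ 1 + 2 * (M ^ 2 / x) := hh
            _ = 1 + 2 * M ^ 2 / x := by ring
        calc P / x ^ M ≤ ((x + M) / x) ^ m := h3
          _ ≤ Real.exp (M ^ 2 / x) := h4
          _ ≤ 1 + 2 * M ^ 2 / x := h6
      calc P ^ (κ / M) ≤ (P / x ^ M) * x ^ κ := h1
        _ ≤ (1 + 2 * M ^ 2 / x) * x ^ κ := mul_le_mul_of_nonneg_right h2 hxκ.le
    calc Real.Gamma (x + κ) ≤ Real.Gamma x * P ^ (κ / M) := hconv
      _ ≤ Real.Gamma x * ((1 + 2 * M ^ 2 / x) * x ^ κ) :=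
          mul_le_mul_of_nonneg_left hPt hGx.le
      _ = (1 + 2 * M ^ 2 / x) * (Real.Gamma x * x ^ κ) := by ring
  -- Lower bound: (1 - 2M²/x) * (Γ x * x^κ) ≤ Γ(x+κ)
  have hlower : (1 - 2 * M ^ 2 / x) * (Real.Gamma x * x ^ κ) ≤ Real.Gamma (x + κ) := by
    have hQpos : 0 < Q := Finset.prod_pos fun i _ => by positivity
    have ht0 : 0 ≤ (M - κ) / M := div_nonneg (by linarith) hM0.le
    have ht1 : (M - κ) / M ≤ 1 := (div_le_one hM0).2 (by linarith)
    have hconv := gamma_convex (show (0:ℝ) < x + κ by positivity)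
      (show (0:ℝ) < x + κ + M by positivity) (by linarith : (0:ℝ) ≤ 1 - (M - κ) / M) ht0
      (by ring)
    have harg : (1 - (M - κ) / M) * (x + κ) + (M - κ) / M * (x + κ + M) = x + M := by
      field_simp
      ring
    rw [harg, hGQ, hGP] at hconv
    have halg : Real.Gamma (x + κ) ^ (1 - (M - κ) / M) *
        (Real.Gamma (x + κ) * Q) ^ ((M - κ) / M)
        = Real.Gamma (x + κ) * Q ^ ((M - κ) / M) := by
      rw [Real.mul_rpow hGxκ.le hQpos.le, ← mul_assoc, ← Real.rpow_add hGxκ]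
      norm_num
    rw [halg] at hconv
    have hQt : Q ^ ((M - κ) / M) ≤ (x + 2 * M) ^ (M - κ) := by
      calc Q ^ ((M - κ) / M) ≤ ((x + 2 * M) ^ m) ^ ((M - κ) / M) :=
            Real.rpow_le_rpow hQpos.le hQhigh ht0
        _ = (x + 2 * M) ^ (M - κ) := by
            rw [← Real.rpow_natCast (x + 2 * M) m, ← Real.rpow_mul (by positivity), ← hMdef]
            congr 1
            field_simp
    have hkey : Real.Gamma x * P ≤ Real.Gamma (x + κ) * (x + 2 * M) ^ (M - κ) :=
      hconv.trans (mul_le_mul_of_nonneg_left hQt hGxκ.le)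
    have hPx : Real.Gamma x * x ^ κ * x ^ (M - κ) ≤ Real.Gamma x * P := by
      have hxx : x ^ κ * x ^ (M - κ) = x ^ M := by
        rw [← Real.rpow_add hxpos]
        congr 1
        ring
      rw [mul_assoc, hxx]
      exact mul_le_mul_of_nonneg_left hPlow hGx.le
    have hZpos : (0:ℝ) < (x + 2 * M) ^ (M - κ) :=
      Real.rpow_pos_of_pos (by positivity) _
    have h7 : Real.Gamma x * x ^ κ * (x / (x + 2 * M)) ^ (M - κ) * (x + 2 * M) ^ (M - κ)
        ≤ Real.Gamma (x + κ) * (x + 2 * M) ^ (M - κ) := by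
      have heq : Real.Gamma x * x ^ κ * (x / (x + 2 * M)) ^ (M - κ) * (x + 2 * M) ^ (M - κ)
          = Real.Gamma x * x ^ κ * x ^ (M - κ) := by
        rw [Real.div_rpow hxpos.le (by positivity)]
        field_simp
      rw [heq]
      exact hPx.trans hkey
    have h8 : Real.Gamma x * x ^ κ * (x / (x + 2 * M)) ^ (M - κ) ≤ Real.Gamma (x + κ) :=
      le_of_mul_le_mul_right h7 hZpos
    have he1 : M - κ ≤ 1 := by
      have := Nat.ceil_lt_add_one hκ.le
      have hlt : M < κ + 1 := by rw [hMdef]; exact_mod_cast this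
      linarith
    have hbase0 : (0:ℝ) < x / (x + 2 * M) := by positivity
    have hbase1 : x / (x + 2 * M) ≤ 1 := (div_le_one (by positivity)).2 (by linarith)
    have h9 : x / (x + 2 * M) ≤ (x / (x + 2 * M)) ^ (M - κ) := by
      have := Real.rpow_le_rpow_of_exponent_ge hbase0 hbase1 he1
      rwa [Real.rpow_one] at this
    have h10 : 1 - 2 * M ^ 2 / x ≤ x / (x + 2 * M) := by
      rw [le_div_iff₀ (by positivity)]
      have hexp : (1 - 2 * M ^ 2 / x) * (x + 2 * M)
          = x + 2 * M - 2 * M ^ 2 - 4 * M ^ 3 / x := by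
        field_simp
        ring
      rw [hexp]
      have h11 : (0:ℝ) ≤ 4 * M ^ 3 / x := by positivity
      have hMM : M ≤ M ^ 2 := by nlinarith
      linarith
    calc (1 - 2 * M ^ 2 / x) * (Real.Gamma x * x ^ κ)
        ≤ (x / (x + 2 * M)) ^ (M - κ) * (Real.Gamma x * x ^ κ) :=
          mul_le_mul_of_nonneg_right (h10.trans h9) hden.le
      _ = Real.Gamma x * x ^ κ * (x / (x + 2 * M)) ^ (M - κ) := by ring
      _ ≤ Real.Gamma (x + κ) := h8
  rw [abs_le]
  constructor
  · have h := (le_div_iff₀ hden).2 hlower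
    linarith
  · have h := (div_le_iff₀ hden).2 hupper
    linarith

/-- (Pointwise uniform relative error of the approximate Beta density.)
Fix `κ > 0`. There exist `C > 0` and `λ₀ > 0` such that for all `λ ≥ λ₀` and all
`y ∈ (0, 1)`,
`|y^{κλ−1}(1−y)^{κ−1}/B(κλ, κ) − ((κλ)^κ/Γ(κ))·y^{κλ−1}(1−y)^{κ−1}|
  ≤ (C/λ)·((κλ)^κ/Γ(κ))·y^{κλ−1}(1−y)^{κ−1}`. -/
theorem beta_density_uniform_relative_error (κ : ℝ) (hκ : 0 < κ) :
    ∃ C > (0 : ℝ), ∃ l₀ > (0 : ℝ), ∀ l ≥ l₀, ∀ y ∈ Set.Ioo (0 : ℝ) 1,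
      |y ^ (κ * l - 1) * (1 - y) ^ (κ - 1) / betaFun (κ * l) κ -
          (κ * l) ^ κ / Real.Gamma κ * (y ^ (κ * l - 1) * (1 - y) ^ (κ - 1))| ≤
        C / l * ((κ * l) ^ κ / Real.Gamma κ * (y ^ (κ * l - 1) * (1 - y) ^ (κ - 1))) := by
  set M : ℝ := (⌈κ⌉₊ : ℝ) with hMdef
  have hM0 : 0 < M := by
    rw [hMdef]
    exact_mod_cast Nat.ceil_pos.2 hκ
  refine ⟨2 * M ^ 2 / κ, by positivity, 2 * M ^ 2 / κ, by positivity, fun l hl y hy => ?_⟩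
  obtain ⟨hy0, hy1⟩ := hy
  have hl0 : (0:ℝ) < l := lt_of_lt_of_le (by positivity) hl
  have hxge : 2 * M ^ 2 ≤ κ * l := by
    have h1 := mul_le_mul_of_nonneg_left hl hκ.le
    have h2 : κ * (2 * M ^ 2 / κ) = 2 * M ^ 2 := by field_simp
    linarith
  have hR := ratio_bound κ hκ hxge
  set x := κ * l with hxdef
  have hxpos : 0 < x := by positivity
  set p := y ^ (x - 1) * (1 - y) ^ (κ - 1) with hp
  have hppos : 0 < p :=
    mul_pos (Real.rpow_pos_of_pos hy0 _) (Real.rpow_pos_of_pos (by linarith) _)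
  have hGκ : 0 < Real.Gamma κ := Real.Gamma_pos_of_pos hκ
  have hGx : 0 < Real.Gamma x := Real.Gamma_pos_of_pos hxpos
  have hGxκ : 0 < Real.Gamma (x + κ) := Real.Gamma_pos_of_pos (by positivity)
  have hxκ : (0:ℝ) < x ^ κ := Real.rpow_pos_of_pos hxpos κ
  have hid : p / betaFun x κ - x ^ κ / Real.Gamma κ * p
      = (x ^ κ / Real.Gamma κ * p) * (Real.Gamma (x + κ) / (Real.Gamma x * x ^ κ) - 1) := by
    rw [betaFun]
    field_simp
  rw [hid, abs_mul, abs_of_pos (show (0:ℝ) < x ^ κ / Real.Gamma κ * p by positivity)]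
  calc x ^ κ / Real.Gamma κ * p * |Real.Gamma (x + κ) / (Real.Gamma x * x ^ κ) - 1|
      ≤ x ^ κ / Real.Gamma κ * p * (2 * M ^ 2 / x) :=
        mul_le_mul_of_nonneg_left hR (by positivity)
    _ = 2 * M ^ 2 / κ / l * (x ^ κ / Real.Gamma κ * p) := by
        rw [div_div, ← hxdef]
        ring
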